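/- arXiv:1606.02155 — 3 statements merged into one kernel-verified Lean document; each statement's English description precedes it below -/
import Mathlib

section
/- Let φ : [0,∞)² → [0,∞) be continuous, strictly increasing in each coordinate, with φ(0,0) = 0 and lim_{t→∞} φ(tz) = ∞ for nonzero z. If sequences aᵢ → a and bᵢ → b in [0,∞), then +̃_φ(aᵢ, bᵢ) → +̃_φ(a, b). In other words, the Orlicz addition map (a,b) ↦ +̃_φ(a,b) is continuous on [0,∞)². -/
open Filter Set

/-- The Orlicz addition of two nonnegative numbers: the unique `λ > 0` with
`φ(a/λ, b/λ) = 1` when `a + b > 0`, and `0` when `a = b = 0`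
(since `sInf ∅ = 0` in `ℝ`). -/
noncomputable def orliczAdd (φ : ℝ → ℝ → ℝ) (a b : ℝ) : ℝ :=
  sInf {l : ℝ | 0 < l ∧ φ (a / l) (b / l) = 1}

/-!
For `(a, b) ≠ (0, 0)` the function `l ↦ φ (a / l) (b / l)` is continuous and strictly decreasing
on `(0, ∞)`, tends to `∞` at `0⁺` and to `φ 0 0 = 0` at `∞`, so `orliczAdd φ a b` is its unique
level-one point. Hence, for `l > 0`,
`l < orliczAdd φ a b ↔ 1 < φ (a / l) (b / l)` and `orliczAdd φ a b < l ↔ φ (a / l) (b / l) < 1`,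
which also hold at `(a, b) = (0, 0)`. For fixed `l` both right-hand sides are open conditions on
`(a, b)` by continuity of `φ`, and this is exactly continuity of `orliczAdd φ`.
-/

open Topology

lemma orliczAdd_nonneg (φ : ℝ → ℝ → ℝ) (a b : ℝ) : 0 ≤ orliczAdd φ a b :=
  Real.sInf_nonneg fun _ hl => hl.1.le

lemma orliczAdd_zero_zero {φ : ℝ → ℝ → ℝ} (h0 : φ 0 0 = 0) : orliczAdd φ 0 0 = 0 := by
  simp [orliczAdd, h0]

lemma strictMonoOn_uncurry_of_strictMonoOn {φ : ℝ → ℝ → ℝ}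
    (hm1 : ∀ y : ℝ, 0 ≤ y → StrictMonoOn (fun x => φ x y) (Ici 0))
    (hm2 : ∀ x : ℝ, 0 ≤ x → StrictMonoOn (fun y => φ x y) (Ici 0)) :
    StrictMonoOn (fun z : ℝ × ℝ => φ z.1 z.2) (Ici 0 ×ˢ Ici 0) := by
  rintro ⟨x, y⟩ ⟨hx, hy⟩ ⟨x', y'⟩ ⟨hx', hy'⟩ hlt
  rcases Prod.lt_iff.1 hlt with ⟨hxx, hyy⟩ | ⟨hxx, hyy⟩
  · calc φ x y < φ x' y := hm1 y hy hx hx' hxx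
      _ ≤ φ x' y' := (hm2 x' hx').monotoneOn hy hy' hyy
  · calc φ x y ≤ φ x' y := (hm1 y hy).monotoneOn hx hx' hxx
      _ < φ x' y' := hm2 x' hx' hy hy' hyy

lemma strictAntiOn_div_prodMk {a b : ℝ} (ha : 0 ≤ a) (hb : 0 ≤ b) (hab : (a, b) ≠ (0, 0)) :
    StrictAntiOn (fun l : ℝ => (a / l, b / l)) (Ioi 0) := by
  intro l₁ hl₁ l₂ _ hlt
  rcases ha.lt_or_eq with ha | rfl
  · exact Prod.lt_iff.2 <| .inl
      ⟨div_lt_div_of_pos_left ha hl₁ hlt, div_le_div_of_nonneg_left hb hl₁ hlt.le⟩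
  · have hb : 0 < b := hb.lt_of_ne (by rintro rfl; exact hab rfl)
    exact Prod.lt_iff.2 <| .inr ⟨by simp, div_lt_div_of_pos_left hb hl₁ hlt⟩

lemma mapsTo_div_prodMk {a b : ℝ} (ha : 0 ≤ a) (hb : 0 ≤ b) :
    MapsTo (fun l : ℝ => (a / l, b / l)) (Ioi 0) (Ici 0 ×ˢ Ici 0) :=
  fun _ hl => ⟨div_nonneg ha (le_of_lt hl), div_nonneg hb (le_of_lt hl)⟩

lemma strictAntiOn_phi_div {φ : ℝ → ℝ → ℝ}
    (hm1 : ∀ y : ℝ, 0 ≤ y → StrictMonoOn (fun x => φ x y) (Ici 0))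
    (hm2 : ∀ x : ℝ, 0 ≤ x → StrictMonoOn (fun y => φ x y) (Ici 0))
    {a b : ℝ} (ha : 0 ≤ a) (hb : 0 ≤ b) (hab : (a, b) ≠ (0, 0)) :
    StrictAntiOn (fun l => φ (a / l) (b / l)) (Ioi 0) :=
  (strictMonoOn_uncurry_of_strictMonoOn hm1 hm2).comp_strictAntiOn
    (strictAntiOn_div_prodMk ha hb hab) (mapsTo_div_prodMk ha hb)

lemma exists_phi_div_eq_one {φ : ℝ → ℝ → ℝ}
    (hc : ContinuousOn (fun z : ℝ × ℝ => φ z.1 z.2) (Ici 0 ×ˢ Ici 0))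
    (h0 : φ 0 0 = 0)
    (hlim : ∀ z₁ z₂ : ℝ, 0 ≤ z₁ → 0 ≤ z₂ → (z₁, z₂) ≠ (0, 0) →
      Tendsto (fun t => φ (t * z₁) (t * z₂)) atTop atTop)
    {a b : ℝ} (ha : 0 ≤ a) (hb : 0 ≤ b) (hab : (a, b) ≠ (0, 0)) :
    ∃ l, 0 < l ∧ φ (a / l) (b / l) = 1 := by
  have hcont : ContinuousOn (fun l => φ (a / l) (b / l)) (Ioi 0) :=
    hc.comp (by fun_prop (disch := exact fun _ hl => ne_of_gt hl)) (mapsTo_div_prodMk ha hb)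
  obtain ⟨t, ht1, ht0⟩ :=
    ((hlim a b ha hb hab).eventually_gt_atTop 1 |>.and (eventually_gt_atTop 0)).exists
  have htail : Tendsto (fun l => φ (a / l) (b / l)) atTop (𝓝 0) := by
    have hdiv : Tendsto (fun l : ℝ => (a / l, b / l)) atTop (𝓝[Ici 0 ×ˢ Ici 0] (0, 0)) :=
      tendsto_nhdsWithin_iff.2
        ⟨(tendsto_const_nhds.div_atTop tendsto_id).prodMk_nhds
          (tendsto_const_nhds.div_atTop tendsto_id),
          (eventually_gt_atTop 0).mono fun _ hl => mapsTo_div_prodMk ha hb hl⟩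
    simpa only [Function.comp_def, h0] using (hc (0, 0) (by simp)).tendsto.comp hdiv
  obtain ⟨L, hL1, hL0⟩ := (htail.eventually_lt_const one_pos |>.and (eventually_gt_atTop 0)).exists
  have ht1' : 1 ≤ φ (a / t⁻¹) (b / t⁻¹) := by
    simpa only [div_inv_eq_mul, mul_comm _ t] using ht1.le
  obtain ⟨l, hl, hl1⟩ :=
    isPreconnected_Ioi.intermediate_value hL0 (inv_pos.2 ht0) hcont ⟨hL1.le, ht1'⟩
  exact ⟨l, hl, hl1⟩

lemma orliczAdd_eq_of_phi_div_eq_one {φ : ℝ → ℝ → ℝ}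
    (hm1 : ∀ y : ℝ, 0 ≤ y → StrictMonoOn (fun x => φ x y) (Ici 0))
    (hm2 : ∀ x : ℝ, 0 ≤ x → StrictMonoOn (fun y => φ x y) (Ici 0))
    {a b l : ℝ} (ha : 0 ≤ a) (hb : 0 ≤ b) (hab : (a, b) ≠ (0, 0))
    (hl : 0 < l) (h : φ (a / l) (b / l) = 1) :
    orliczAdd φ a b = l := by
  have hset : {l' : ℝ | 0 < l' ∧ φ (a / l') (b / l') = 1} = {l} := by
    ext l'
    refine ⟨fun ⟨hl', h'⟩ => (strictAntiOn_phi_div hm1 hm2 ha hb hab).injOn hl' hl (h'.trans h.symm),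
      ?_⟩
    rintro rfl
    exact ⟨hl, h⟩
  rw [orliczAdd, hset, csInf_singleton]

structure OrliczAdmissible (φ : ℝ → ℝ → ℝ) : Prop where
  continuousOn : ContinuousOn (fun z : ℝ × ℝ => φ z.1 z.2) (Ici 0 ×ˢ Ici 0)
  strictMonoOn_left : ∀ y : ℝ, 0 ≤ y → StrictMonoOn (fun x => φ x y) (Ici 0)
  strictMonoOn_right : ∀ x : ℝ, 0 ≤ x → StrictMonoOn (fun y => φ x y) (Ici 0)
  map_zero_zero : φ 0 0 = 0
  tendsto_atTop : ∀ z₁ z₂ : ℝ, 0 ≤ z₁ → 0 ≤ z₂ → (z₁, z₂) ≠ (0, 0) →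
    Tendsto (fun t => φ (t * z₁) (t * z₂)) atTop atTop

namespace OrliczAdmissible

variable {φ : ℝ → ℝ → ℝ} {a b l : ℝ}

theorem orliczAdd_spec (hφ : OrliczAdmissible φ) (ha : 0 ≤ a) (hb : 0 ≤ b)
    (hab : (a, b) ≠ (0, 0)) :
    0 < orliczAdd φ a b ∧ φ (a / orliczAdd φ a b) (b / orliczAdd φ a b) = 1 := by
  obtain ⟨l, hl, h⟩ :=
    exists_phi_div_eq_one hφ.continuousOn hφ.map_zero_zero hφ.tendsto_atTop ha hb hab
  rw [orliczAdd_eq_of_phi_div_eq_one hφ.strictMonoOn_left hφ.strictMonoOn_right ha hb hab hl h]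
  exact ⟨hl, h⟩

theorem orliczAdd_lt_iff (hφ : OrliczAdmissible φ) (ha : 0 ≤ a) (hb : 0 ≤ b) (hl : 0 < l) :
    orliczAdd φ a b < l ↔ φ (a / l) (b / l) < 1 := by
  rcases eq_or_ne (a, b) (0, 0) with hab | hab
  · obtain ⟨rfl, rfl⟩ := Prod.mk.inj hab
    simp [orliczAdd_zero_zero hφ.map_zero_zero, hφ.map_zero_zero, hl]
  · obtain ⟨hpos, hone⟩ := hφ.orliczAdd_spec ha hb hab
    conv_rhs => rw [← hone]
    exact ((strictAntiOn_phi_div hφ.strictMonoOn_left hφ.strictMonoOn_right ha hb hab).lt_iff_gt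
      hl hpos).symm

theorem lt_orliczAdd_iff (hφ : OrliczAdmissible φ) (ha : 0 ≤ a) (hb : 0 ≤ b) (hl : 0 < l) :
    l < orliczAdd φ a b ↔ 1 < φ (a / l) (b / l) := by
  rcases eq_or_ne (a, b) (0, 0) with hab | hab
  · obtain ⟨rfl, rfl⟩ := Prod.mk.inj hab
    simp [orliczAdd_zero_zero hφ.map_zero_zero, hφ.map_zero_zero, hl.le.not_gt]
  · obtain ⟨hpos, hone⟩ := hφ.orliczAdd_spec ha hb hab
    conv_rhs => rw [← hone]
    exact ((strictAntiOn_phi_div hφ.strictMonoOn_left hφ.strictMonoOn_right ha hb hab).lt_iff_gt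
      hpos hl).symm

theorem continuousWithinAt_phi_div (hφ : OrliczAdmissible φ) (hl : 0 < l) {p : ℝ × ℝ}
    (hp : p ∈ Ici 0 ×ˢ Ici 0) :
    ContinuousWithinAt (fun z : ℝ × ℝ => φ (z.1 / l) (z.2 / l)) (Ici 0 ×ˢ Ici 0) p :=
  hφ.continuousOn.comp (f := fun z : ℝ × ℝ => (z.1 / l, z.2 / l)) (by fun_prop)
    (fun _ hz => ⟨div_nonneg hz.1 hl.le, div_nonneg hz.2 hl.le⟩) p hp

theorem continuousOn_orliczAdd (hφ : OrliczAdmissible φ) :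
    ContinuousOn (fun z : ℝ × ℝ => orliczAdd φ z.1 z.2) (Ici 0 ×ˢ Ici 0) := by
  intro p hp
  have hmem : ∀ᶠ z in 𝓝[Ici 0 ×ˢ Ici 0] p, z ∈ Ici (0 : ℝ) ×ˢ Ici 0 := self_mem_nhdsWithin
  refine tendsto_order.2 ⟨fun c hc => ?_, fun c hc => ?_⟩
  · rcases lt_or_ge c 0 with hc0 | hc0
    · exact .of_forall fun z => hc0.trans_le (orliczAdd_nonneg φ _ _)
    obtain ⟨l, hcl, hl⟩ := exists_between hc
    have hl0 : 0 < l := hc0.trans_lt hcl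
    filter_upwards [(hφ.continuousWithinAt_phi_div hl0 hp).eventually_const_lt
      ((hφ.lt_orliczAdd_iff hp.1 hp.2 hl0).1 hl), hmem] with z hz hzs
    exact hcl.trans ((hφ.lt_orliczAdd_iff hzs.1 hzs.2 hl0).2 hz)
  · have hc0 : 0 < c := (orliczAdd_nonneg φ _ _).trans_lt hc
    filter_upwards [(hφ.continuousWithinAt_phi_div hc0 hp).eventually_lt_const
      ((hφ.orliczAdd_lt_iff hp.1 hp.2 hc0).1 hc), hmem] with z hz hzs
    exact (hφ.orliczAdd_lt_iff hzs.1 hzs.2 hc0).2 hz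

end OrliczAdmissible

theorem orlicz_add_continuous
    (φ : ℝ → ℝ → ℝ)
    (hc : ContinuousOn (fun z : ℝ × ℝ => φ z.1 z.2) (Set.Ici 0 ×ˢ Set.Ici 0))
    (hm1 : ∀ y : ℝ, 0 ≤ y → StrictMonoOn (fun x => φ x y) (Set.Ici 0))
    (hm2 : ∀ x : ℝ, 0 ≤ x → StrictMonoOn (fun y => φ x y) (Set.Ici 0))
    (h0 : φ 0 0 = 0)
    (hlim : ∀ z₁ z₂ : ℝ, 0 ≤ z₁ → 0 ≤ z₂ → (z₁, z₂) ≠ (0, 0) →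
      Tendsto (fun t => φ (t * z₁) (t * z₂)) atTop atTop)
    (a b : ℝ) (ha : 0 ≤ a) (hb : 0 ≤ b)
    (u v : ℕ → ℝ) (hu : ∀ i, 0 ≤ u i) (hv : ∀ i, 0 ≤ v i)
    (hua : Tendsto u atTop (nhds a)) (hvb : Tendsto v atTop (nhds b)) :
    Tendsto (fun i => orliczAdd φ (u i) (v i)) atTop (nhds (orliczAdd φ a b)) ∧
      ContinuousOn (fun z : ℝ × ℝ => orliczAdd φ z.1 z.2) (Set.Ici 0 ×ˢ Set.Ici 0) := by
  have hcont := (OrliczAdmissible.mk hc hm1 hm2 h0 hlim).continuousOn_orliczAdd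
  have huv : Tendsto (fun i => (u i, v i)) atTop (𝓝[Ici 0 ×ˢ Ici 0] (a, b)) :=
    tendsto_nhdsWithin_iff.2 ⟨hua.prodMk_nhds hvb, .of_forall fun i => ⟨hu i, hv i⟩⟩
  have hseq := (hcont (a, b) (mk_mem_prod ha hb)).tendsto.comp huv
  exact ⟨hseq, hcont⟩
end

section
/- Let φ₁, φ₂ : [0,∞) → [0,∞) be continuous, strictly increasing, with φ₁(0)=φ₂(0)=0, φ₁(1)=φ₂(1)=1, lim_{t→∞} φᵢ(t)=∞, and suppose the left derivative (φ₁)'_l(1) exists and is positive. Fix a > 0 and b ≥ 0. For ε > 0 small, let S_ε be the unique λ > 0 with φ₁(a/λ) + ε φ₂(b/λ) = 1. Then lim_{ε→0⁺} (S_ε − a)/ε = φ₂(b/a) · a / (φ₁)'_l(1). -/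
open Filter Set

theorem linear_orlicz_sum_first_variation
    (φ₁ φ₂ : ℝ → ℝ)
    (hc₁ : ContinuousOn φ₁ (Set.Ici 0)) (hc₂ : ContinuousOn φ₂ (Set.Ici 0))
    (hm₁ : StrictMonoOn φ₁ (Set.Ici 0)) (hm₂ : StrictMonoOn φ₂ (Set.Ici 0))
    (h01 : φ₁ 0 = 0) (h02 : φ₂ 0 = 0)
    (h11 : φ₁ 1 = 1) (h12 : φ₂ 1 = 1)
    (hl₁ : Filter.Tendsto φ₁ Filter.atTop Filter.atTop)
    (hl₂ : Filter.Tendsto φ₂ Filter.atTop Filter.atTop)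
    (d : ℝ) (hd : 0 < d)
    (hderiv : HasDerivWithinAt φ₁ d (Set.Iio 1) 1)
    (a b : ℝ) (ha : 0 < a) (hb : 0 ≤ b)
    (S : ℝ → ℝ)
    (hS : ∀ ε ∈ Set.Ioc (0:ℝ) 1,
      0 < S ε ∧ φ₁ (a / S ε) + ε * φ₂ (b / S ε) = 1) :
    Tendsto (fun ε => (S ε - a) / ε) (nhdsWithin 0 (Set.Ioi 0))
      (nhds (φ₂ (b / a) * a / d)) := by
  have hfilter : Set.Ioc (0:ℝ) 1 ∈ nhdsWithin (0:ℝ) (Set.Ioi 0) := by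
    filter_upwards [Ioo_mem_nhdsGT_of_mem
      (⟨le_refl 0, one_pos⟩ : (0:ℝ) ∈ Set.Ico (0:ℝ) 1)] with x hx
    exact ⟨hx.1, le_of_lt hx.2⟩
  rcases eq_or_lt_of_le hb with hb0 | hb0
  · -- case b = 0
    have hCa : φ₂ (b / a) = 0 := by rw [← hb0]; simpa using h02
    have hev : ∀ᶠ ε in nhdsWithin (0:ℝ) (Set.Ioi 0), (0:ℝ) = (S ε - a) / ε := by
      filter_upwards [hfilter] with ε hε
      obtain ⟨hpos, heq⟩ := hS ε hε
      have hb' : b / S ε = 0 := by rw [← hb0]; simp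
      rw [hb', h02, mul_zero, add_zero] at heq
      have h1 : a / S ε = 1 := by
        apply hm₁.injOn _ _ (heq.trans h11.symm)
        · exact le_of_lt (div_pos ha hpos)
        · norm_num
      have hSa : S ε = a := by
        field_simp at h1; linarith
      simp [hSa]
    rw [hCa]
    simp only [zero_mul, zero_div]
    exact tendsto_const_nhds.congr' hev
  · -- case b > 0
    set C := φ₂ (b / a) with hC
    have hCpos : 0 < C := by
      rw [hC, ← h02]
      exact hm₂ Set.self_mem_Ici (le_of_lt (div_pos hb0 ha)) (div_pos hb0 ha)
    have key : ∀ ε ∈ Set.Ioc (0:ℝ) 1,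
        a < S ε ∧ 0 < φ₂ (b / S ε) ∧ φ₂ (b / S ε) ≤ C ∧ a / S ε < 1 ∧
          φ₁ (a / S ε) = 1 - ε * φ₂ (b / S ε) := by
      intro ε hε
      obtain ⟨hpos, heq⟩ := hS ε hε
      have hX : 0 < φ₂ (b / S ε) := by
        rw [← h02]
        exact hm₂ Set.self_mem_Ici (le_of_lt (div_pos hb0 hpos)) (div_pos hb0 hpos)
      have hφeq : φ₁ (a / S ε) = 1 - ε * φ₂ (b / S ε) := by linarith
      have hlt : φ₁ (a / S ε) < φ₁ 1 := by
        rw [h11, hφeq]; nlinarith [hε.1]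
      have ht1 : a / S ε < 1 :=
        (hm₁.lt_iff_lt (le_of_lt (div_pos ha hpos))
          (by norm_num : (1:ℝ) ∈ Set.Ici 0)).1 hlt
      have haS : a < S ε := (div_lt_one hpos).1 ht1
      have hle : φ₂ (b / S ε) ≤ C := by
        apply (hm₂.le_iff_le (div_nonneg hb0.le hpos.le) (div_nonneg hb0.le ha.le)).2
        gcongr
      exact ⟨haS, hX, hle, ht1, hφeq⟩
    have hStend : Tendsto S (nhdsWithin 0 (Set.Ioi 0)) (nhds a) := by
      rw [Metric.tendsto_nhds]
      intro δ hδ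
      have hadpos : (0:ℝ) < a + δ := by linarith
      have h1 : a / (a + δ) < 1 := (div_lt_one hadpos).2 (by linarith)
      have h2 : φ₁ (a / (a + δ)) < 1 := by
        rw [← h11]
        exact hm₁ (le_of_lt (div_pos ha hadpos)) (by norm_num) h1
      set u := min 1 ((1 - φ₁ (a / (a + δ))) / C) with hu
      have hupos : 0 < u := lt_min one_pos (div_pos (by linarith) hCpos)
      filter_upwards [Ioo_mem_nhdsGT_of_mem
        (⟨le_refl 0, hupos⟩ : (0:ℝ) ∈ Set.Ico (0:ℝ) u)] with ε hε
      have hε1 : ε ∈ Set.Ioc (0:ℝ) 1 :=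
        ⟨hε.1, le_of_lt (lt_of_lt_of_le hε.2 (min_le_left _ _))⟩
      obtain ⟨haS, hX, hXle, ht1, hφeq⟩ := key ε hε1
      obtain ⟨hpos, -⟩ := hS ε hε1
      have hεu : ε < (1 - φ₁ (a / (a + δ))) / C :=
        lt_of_lt_of_le hε.2 (min_le_right _ _)
      have h4 : ε * C < 1 - φ₁ (a / (a + δ)) := (lt_div_iff₀ hCpos).1 hεu
      have h3 : φ₁ (a / (a + δ)) < φ₁ (a / S ε) := by
        rw [hφeq]
        nlinarith [hε.1.le]
      have h5 : a / (a + δ) < a / S ε :=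
        (hm₁.lt_iff_lt (div_nonneg ha.le hadpos.le) (div_nonneg ha.le hpos.le)).1 h3
      have h6 : S ε < a + δ := by
        rw [div_lt_div_iff₀ hadpos hpos] at h5
        nlinarith
      rw [Real.dist_eq, abs_of_nonneg (by linarith)]
      linarith
    have hIio : Set.Iio (1:ℝ) \ {1} = Set.Iio 1 :=
      Set.diff_singleton_eq_self (by simp)
    have hslope : Tendsto (slope φ₁ 1) (nhdsWithin 1 (Set.Iio 1)) (nhds d) := by
      have h := hasDerivWithinAt_iff_tendsto_slope.1 hderiv
      rwa [hIio] at h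
    have htt : Tendsto (fun ε => a / S ε) (nhdsWithin 0 (Set.Ioi 0))
        (nhdsWithin 1 (Set.Iio 1)) := by
      rw [tendsto_nhdsWithin_iff]
      constructor
      · have h : Tendsto (fun ε => a / S ε) (nhdsWithin 0 (Set.Ioi 0))
            (nhds (a / a)) :=
          (tendsto_const_nhds (x := a)).div hStend (ne_of_gt ha)
        rwa [div_self (ne_of_gt ha)] at h
      · filter_upwards [hfilter] with ε hε
        exact (key ε hε).2.2.2.1
    have hbdiv : Tendsto (fun ε => b / S ε) (nhdsWithin 0 (Set.Ioi 0))
        (nhdsWithin (b / a) (Set.Ici 0)) := by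
      rw [tendsto_nhdsWithin_iff]
      refine ⟨(tendsto_const_nhds (x := b)).div hStend (ne_of_gt ha), ?_⟩
      filter_upwards [hfilter] with ε hε
      exact div_nonneg hb ((hS ε hε).1).le
    have hφ₂tend : Tendsto (fun ε => φ₂ (b / S ε)) (nhdsWithin 0 (Set.Ioi 0))
        (nhds C) :=
      Filter.Tendsto.comp (hc₂ (b / a) (div_nonneg hb ha.le)) hbdiv
    have hmain : Tendsto (fun ε => S ε * φ₂ (b / S ε) / slope φ₁ 1 (a / S ε))
        (nhdsWithin 0 (Set.Ioi 0)) (nhds (a * C / d)) :=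
      (hStend.mul hφ₂tend).div (hslope.comp htt) (ne_of_gt hd)
    have heq : ∀ᶠ ε in nhdsWithin (0:ℝ) (Set.Ioi 0),
        S ε * φ₂ (b / S ε) / slope φ₁ 1 (a / S ε) = (S ε - a) / ε := by
      filter_upwards [hfilter] with ε hε
      obtain ⟨haS, hX, hXle, ht1, hφeq⟩ := key ε hε
      have hpos := (hS ε hε).1
      have hsl : slope φ₁ 1 (a / S ε) = (φ₁ (a / S ε) - 1) / (a / S ε - 1) := by
        rw [slope_def_field, h11]
      rw [hsl, hφeq]
      have h1 : S ε ≠ 0 := ne_of_gt hpos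
      have h2 : ε ≠ 0 := ne_of_gt hε.1
      have h3 : φ₂ (b / S ε) ≠ 0 := ne_of_gt hX
      have h4 : a / S ε - 1 ≠ 0 := ne_of_lt (by linarith)
      field_simp
      ring
    have hgoal : φ₂ (b / a) * a / d = a * C / d := by rw [← hC]; ring
    rw [hgoal]
    exact hmain.congr' heq
end

section
/- Let (Ω, μ) be a measure space, A ⊆ Ω measurable with μ(A) ≠ 0. Let φ₁, φ₂ : [0,∞) → [0,∞) be continuous, strictly increasing with φᵢ(0)=0, φᵢ(1)=1, lim_{t→∞}φᵢ(t)=∞, and (φ₁)'_l(1) exists and is positive. Let p₁ : Ω → (0,∞) and p₂ : Ω → [0,∞) be measurable with ∫_A p₁ dμ < ∞ and sup_{x∈A} p₂(x)/p₁(x) < a₁ for some finite constant a₁. For ε > 0 let p₁ +̃_{φ,ε} p₂ be defined pointwise by φ₁(p₁/λ) + ε φ₂(p₂/λ) = 1. Then (φ₁)'_l(1) · lim_{ε→0⁺} [∫_A (p₁ +̃_{φ,ε} p₂) dμ − ∫_A p₁ dμ]/ε = ∫_A φ₂(p₂(x)/p₁(x)) p₁(x) dμ(x). -/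
/-! Writing `t = p₁ / F ∈ (0, 1]`, the defining equation reads `1 - φ₁ t = ε φ₂ (p₂ / F)`, so
`(F - p₁) / ε = F · (1 - t) / (1 - φ₁ t) · φ₂ (p₂ / F)`. As `ε → 0⁺` we get `t → 1⁻`, the middle
factor tends to `d⁻¹` and the whole quotient to `d⁻¹ φ₂ (p₂ / p₁) p₁`. The left derivative also
gives `1 - t ≤ (2 / d) (1 - φ₁ t)` for `t` near `1`, which together with `p₂ / p₁ < a₁` on `A`
bounds the quotients by a multiple of `p₁`, so dominated convergence applies. -/

open Filter Set MeasureTheory Topology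

lemma nonneg_of_monotoneOn_Ici {φ : ℝ → ℝ} (hm : MonotoneOn φ (Ici 0)) (h0 : φ 0 = 0) {s : ℝ}
    (hs : 0 ≤ s) : 0 ≤ φ s :=
  h0 ▸ hm self_mem_Ici hs hs

lemma MonotoneOn.measurable_comp_of_nonneg {Ω : Type*} [MeasurableSpace Ω] {φ : ℝ → ℝ}
    (hm : MonotoneOn φ (Ici 0)) {g : Ω → ℝ} (hg : Measurable g) (hg0 : ∀ x, 0 ≤ g x) :
    Measurable fun x => φ (g x) := by
  have hmono : Monotone fun s => φ (max s 0) := fun a b hab =>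
    hm (le_max_right a 0) (le_max_right b 0) (max_le_max hab le_rfl)
  simpa only [Function.comp_def, max_eq_left (hg0 _)] using hmono.measurable.comp hg

lemma tendsto_of_tendsto_comp_of_strictMonoOn {α : Type*} {l : Filter α} {φ : ℝ → ℝ}
    (hm : StrictMonoOn φ (Ici 0)) {c : ℝ} (hc : 0 ≤ c) {g : α → ℝ}
    (hg0 : ∀ᶠ a in l, 0 ≤ g a) (hgc : ∀ᶠ a in l, g a ≤ c)
    (h : Tendsto (fun a => φ (g a)) l (𝓝 (φ c))) : Tendsto g l (𝓝 c) := by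
  refine tendsto_order.2 ⟨fun b hb => ?_, fun b hb => hgc.mono fun a ha => ha.trans_lt hb⟩
  rcases lt_or_ge b 0 with hb0 | hb0
  · exact hg0.mono fun a ha => hb0.trans_le ha
  · filter_upwards [hg0, (tendsto_order.1 h).1 _ (hm hb0 hc hb)] with a ha hφa
    exact (hm.lt_iff_lt hb0 ha).1 hφa

lemma tendsto_sub_div_sub_of_hasDerivWithinAt_Iio {φ : ℝ → ℝ} {c d : ℝ}
    (h : HasDerivWithinAt φ d (Iio c) c) (hd : d ≠ 0) :
    Tendsto (fun t => (c - t) / (φ c - φ t)) (𝓝[<] c) (𝓝 d⁻¹) := by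
  have hslope := hasDerivWithinAt_iff_tendsto_slope.1 h
  rw [sdiff_singleton_eq_self self_notMem_Iio] at hslope
  refine (hslope.inv₀ hd).congr fun t => ?_
  rw [slope_def_field, inv_div, ← neg_div_neg_eq, neg_sub, neg_sub]

lemma exists_mul_sub_le_sub_of_hasDerivWithinAt_Iio {φ : ℝ → ℝ} {c d κ : ℝ}
    (h : HasDerivWithinAt φ d (Iio c) c) (hκ : κ < d) :
    ∃ b < c, ∀ t ∈ Ioc b c, κ * (c - t) ≤ φ c - φ t := by
  have hslope := hasDerivWithinAt_iff_tendsto_slope.1 h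
  rw [sdiff_singleton_eq_self self_notMem_Iio] at hslope
  obtain ⟨b, hbc, hb⟩ := mem_nhdsLT_iff_exists_Ioo_subset.1 (hslope (Ioi_mem_nhds hκ))
  refine ⟨b, hbc, fun t ht => ?_⟩
  rcases ht.2.eq_or_lt with rfl | htc
  · rw [sub_self, sub_self, mul_zero]
  · have : κ < slope φ c t := hb ⟨ht.1, htc⟩
    rw [slope_def_field, ← neg_div_neg_eq, neg_sub, neg_sub] at this
    exact ((lt_div_iff₀ (sub_pos.2 htc)).1 this).le

lemma measurable_of_strictAntiOn_eq {Ω : Type*} [MeasurableSpace Ω] {G : Ω → ℝ → ℝ} {a : ℝ}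
    (hG : ∀ y, 0 < y → Measurable fun x => G x y) (hanti : ∀ x, StrictAntiOn (G x) (Ioi 0))
    {f : Ω → ℝ} (hf0 : ∀ x, 0 < f x) (hf : ∀ x, G x (f x) = a) : Measurable f := by
  refine measurable_of_Iic fun c => ?_
  rcases le_or_gt c 0 with hc | hc
  · convert MeasurableSet.empty
    exact eq_empty_of_forall_notMem fun x hx => (hc.trans_lt (hf0 x)).not_ge hx
  · have hset : f ⁻¹' Iic c = {x | G x c ≤ a} := by
      ext x
      rw [mem_ofPred_eq, ← hf x]
      exact ((hanti x).le_iff_ge hc (hf0 x)).symm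
    rw [hset]
    exact measurableSet_le (hG c hc) measurable_const

section OrliczSum

variable {φ₁ φ₂ : ℝ → ℝ}

lemma le_of_orlicz_eq (hm₁ : StrictMonoOn φ₁ (Ici 0)) (h11 : φ₁ 1 = 1)
    (hm₂ : MonotoneOn φ₂ (Ici 0)) (h02 : φ₂ 0 = 0) {ε P Q y : ℝ} (hε : 0 ≤ ε) (hP : 0 ≤ P)
    (hQ : 0 ≤ Q) (hy : 0 < y) (heq : φ₁ (P / y) + ε * φ₂ (Q / y) = 1) : P ≤ y := by
  have hφ₂ := nonneg_of_monotoneOn_Ici hm₂ h02 (div_nonneg hQ hy.le)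
  have : φ₁ (P / y) ≤ φ₁ 1 := by rw [h11]; nlinarith
  exact (div_le_one hy).1 ((hm₁.le_iff_le (div_nonneg hP hy.le) (mem_Ici.2 zero_le_one)).1 this)

lemma eq_of_orlicz_eq_zero (hm₁ : StrictMonoOn φ₁ (Ici 0)) (h11 : φ₁ 1 = 1) (h02 : φ₂ 0 = 0)
    {ε P y : ℝ} (hP : 0 ≤ P) (hy : 0 < y) (heq : φ₁ (P / y) + ε * φ₂ (0 / y) = 1) : y = P := by
  rw [zero_div, h02, mul_zero, add_zero, ← h11] at heq
  have := hm₁.injOn (div_nonneg hP hy.le) (mem_Ici.2 zero_le_one) heq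
  exact ((div_eq_one_iff_eq hy.ne').1 this).symm

lemma sub_div_le_of_orlicz_eq (hm₁ : StrictMonoOn φ₁ (Ici 0)) (h11 : φ₁ 1 = 1)
    (hm₂ : MonotoneOn φ₂ (Ici 0)) (h02 : φ₂ 0 = 0) {b κ M : ℝ} (hb : 0 < b) (hκ : 0 < κ)
    (hslope : ∀ t ∈ Ioc b 1, κ * (1 - t) ≤ 1 - φ₁ t) {ε P Q y : ℝ} (hε : 0 < ε)
    (hM : φ₂ (Q / P) ≤ M) (hεM : ε * M < 1 - φ₁ b) (hP : 0 < P) (hQ : 0 ≤ Q) (hy : 0 < y)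
    (heq : φ₁ (P / y) + ε * φ₂ (Q / y) = 1) : (y - P) / ε ≤ M / (κ * b) * P := by
  have hPy := le_of_orlicz_eq hm₁ h11 hm₂ h02 hε.le hP.le hQ hy heq
  have ht1 : P / y ≤ 1 := (div_le_one hy).2 hPy
  have hφ₂ : φ₂ (Q / y) ≤ M := (hm₂ (div_nonneg hQ hy.le) (div_nonneg hQ hP.le)
    (div_le_div_of_nonneg_left hQ hP hPy)).trans hM
  have hφ₁ : 1 - φ₁ (P / y) ≤ ε * M := by nlinarith
  have hbt : b < P / y := (hm₁.lt_iff_lt hb.le (div_nonneg hP.le hy.le)).1 (by linarith)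
  have hκt : κ * (1 - P / y) ≤ ε * M := (hslope _ ⟨hbt, ht1⟩).trans hφ₁
  have hyt : y * (P / y) = P := mul_div_cancel₀ P hy.ne'
  rw [div_mul_eq_mul_div, div_le_div_iff₀ hε (mul_pos hκ hb)]
  have hεM0 : 0 ≤ ε * M := (mul_nonneg hκ.le (sub_nonneg.2 ht1)).trans hκt
  nlinarith [mul_le_mul_of_nonneg_left hκt (mul_nonneg hy.le hb.le),
    mul_le_mul_of_nonneg_left hbt.le (mul_nonneg hy.le hεM0),
    congrArg (· * (κ * b)) hyt, congrArg (· * (ε * M)) hyt]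

lemma exists_eventually_abs_sub_div_le_of_orlicz_eq (hm₁ : StrictMonoOn φ₁ (Ici 0))
    (h11 : φ₁ 1 = 1) {d : ℝ} (hderiv : HasDerivWithinAt φ₁ d (Iio 1) 1) (hd : 0 < d)
    (hm₂ : MonotoneOn φ₂ (Ici 0)) (h02 : φ₂ 0 = 0) (M : ℝ) :
    ∃ C, ∀ᶠ ε in 𝓝[>] 0, ∀ {P Q y : ℝ}, 0 < P → 0 ≤ Q → φ₂ (Q / P) ≤ M → 0 < y →
      φ₁ (P / y) + ε * φ₂ (Q / y) = 1 → |(y - P) / ε| ≤ C * P := by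
  obtain ⟨b₀, hb₀, hslope⟩ :=
    exists_mul_sub_le_sub_of_hasDerivWithinAt_Iio hderiv (half_lt_self hd)
  set b := max b₀ (1 / 2)
  have hb : 0 < b := lt_max_of_lt_right one_half_pos
  have hφ₁b : φ₁ b < 1 := h11 ▸ hm₁ hb.le (mem_Ici.2 zero_le_one) (max_lt hb₀ one_half_lt_one)
  have hsmall : ∀ᶠ ε in 𝓝[>] 0, ε * M < 1 - φ₁ b := by
    have : Tendsto (fun ε : ℝ => ε * M) (𝓝[>] 0) (𝓝 0) := by
      simpa using (tendsto_id.mul_const M).mono_left (nhdsWithin_le_nhds (a := (0 : ℝ)))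
    exact this.eventually (gt_mem_nhds (sub_pos.2 hφ₁b))
  refine ⟨M / (d / 2 * b), ?_⟩
  filter_upwards [self_mem_nhdsWithin, hsmall] with ε hε hεM P Q y hP hQ hM hy heq
  have hε : 0 < ε := hε
  rw [abs_of_nonneg (div_nonneg (sub_nonneg.2
    (le_of_orlicz_eq hm₁ h11 hm₂ h02 hε.le hP.le hQ hy heq)) hε.le)]
  refine sub_div_le_of_orlicz_eq hm₁ h11 hm₂ h02 hb (half_pos hd) (fun t ht => ?_)
    hε hM hεM hP hQ hy heq
  simpa only [h11] using hslope t ⟨(le_max_left _ _).trans_lt ht.1, ht.2⟩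

lemma tendsto_div_of_orlicz_eq (hm₁ : StrictMonoOn φ₁ (Ici 0)) (h11 : φ₁ 1 = 1)
    (hm₂ : MonotoneOn φ₂ (Ici 0)) (h02 : φ₂ 0 = 0) {P Q : ℝ} (hP : 0 < P) (hQ : 0 ≤ Q)
    {y : ℝ → ℝ} (hy : ∀ ε, 0 < ε → 0 < y ε ∧ φ₁ (P / y ε) + ε * φ₂ (Q / y ε) = 1) :
    Tendsto (fun ε => P / y ε) (𝓝[>] 0) (𝓝 1) := by
  have hPy : ∀ ε, 0 < ε → P ≤ y ε := fun ε hε =>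
    le_of_orlicz_eq hm₁ h11 hm₂ h02 hε.le hP.le hQ (hy ε hε).1 (hy ε hε).2
  have ht1 : ∀ ε, 0 < ε → P / y ε ≤ 1 := fun ε hε => (div_le_one (hy ε hε).1).2 (hPy ε hε)
  refine tendsto_of_tendsto_comp_of_strictMonoOn hm₁ zero_le_one
    (eventually_nhdsWithin_of_forall fun ε hε => div_nonneg hP.le (hy ε hε).1.le)
    (eventually_nhdsWithin_of_forall ht1) ?_
  have hlower : Tendsto (fun ε => 1 - ε * φ₂ (Q / P)) (𝓝[>] 0) (𝓝 1) := by
    have : Tendsto (fun ε : ℝ => 1 - ε * φ₂ (Q / P)) (𝓝 0) (𝓝 (1 - 0 * φ₂ (Q / P))) :=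
      tendsto_const_nhds.sub (tendsto_id.mul_const _)
    rw [zero_mul, sub_zero] at this
    exact this.mono_left nhdsWithin_le_nhds
  rw [h11]
  refine tendsto_of_tendsto_of_tendsto_of_le_of_le' hlower tendsto_const_nhds
    (eventually_nhdsWithin_of_forall fun ε hε => ?_)
    (eventually_nhdsWithin_of_forall fun ε hε => ?_)
  · obtain ⟨hyε, heq⟩ := hy ε hε
    have : φ₂ (Q / y ε) ≤ φ₂ (Q / P) := hm₂ (div_nonneg hQ hyε.le) (div_nonneg hQ hP.le)
      (div_le_div_of_nonneg_left hQ hP (hPy ε hε))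
    linarith [mul_le_mul_of_nonneg_left this (le_of_lt hε)]
  · obtain ⟨hyε, heq⟩ := hy ε hε
    linarith [mul_nonneg (le_of_lt hε) (nonneg_of_monotoneOn_Ici hm₂ h02 (div_nonneg hQ hyε.le))]

lemma tendsto_sub_div_of_orlicz_eq (hm₁ : StrictMonoOn φ₁ (Ici 0)) (h11 : φ₁ 1 = 1) {d : ℝ}
    (hderiv : HasDerivWithinAt φ₁ d (Iio 1) 1) (hd : d ≠ 0) (hm₂ : StrictMonoOn φ₂ (Ici 0))
    (hc₂ : ContinuousOn φ₂ (Ici 0)) (h02 : φ₂ 0 = 0) {P Q : ℝ} (hP : 0 < P) (hQ : 0 ≤ Q)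
    {y : ℝ → ℝ} (hy : ∀ ε, 0 < ε → 0 < y ε ∧ φ₁ (P / y ε) + ε * φ₂ (Q / y ε) = 1) :
    Tendsto (fun ε => (y ε - P) / ε) (𝓝[>] 0) (𝓝 (d⁻¹ * (φ₂ (Q / P) * P))) := by
  have ht := tendsto_div_of_orlicz_eq hm₁ h11 hm₂.monotoneOn h02 hP hQ hy
  rcases hQ.eq_or_lt with rfl | hQ
  · rw [zero_div, h02, zero_mul, mul_zero]
    refine tendsto_const_nhds.congr' (eventually_nhdsWithin_of_forall fun ε hε => ?_)
    simp only [eq_of_orlicz_eq_zero hm₁ h11 h02 hP.le (hy ε hε).1 (hy ε hε).2, sub_self, zero_div]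
  have hyP : Tendsto y (𝓝[>] 0) (𝓝 P) := by
    have := (tendsto_const_nhds (x := P)).div ht one_ne_zero
    rw [div_one] at this
    exact this.congr' (eventually_nhdsWithin_of_forall fun ε hε =>
      div_div_cancel₀ hP.ne')
  have hφ₂pos : ∀ ε, 0 < ε → 0 < φ₂ (Q / y ε) := fun ε hε =>
    h02 ▸ hm₂ self_mem_Ici (div_pos hQ (hy ε hε).1).le (div_pos hQ (hy ε hε).1)
  have ht1 : ∀ ε, 0 < ε → P / y ε < 1 := fun ε hε => by
    obtain ⟨hyε, heq⟩ := hy ε hε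
    have : φ₁ (P / y ε) < φ₁ 1 := by nlinarith [hφ₂pos ε hε]
    exact (hm₁.lt_iff_lt (div_nonneg hP.le hyε.le) (mem_Ici.2 zero_le_one)).1 this
  have hquot := (tendsto_sub_div_sub_of_hasDerivWithinAt_Iio hderiv hd).comp
    (tendsto_nhdsWithin_iff.2 ⟨ht, eventually_nhdsWithin_of_forall ht1⟩)
  have hφ₂lim : Tendsto (fun ε => φ₂ (Q / y ε)) (𝓝[>] 0) (𝓝 (φ₂ (Q / P))) :=
    (hc₂.continuousAt (Ici_mem_nhds (div_pos hQ hP))).tendsto.comp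
      (tendsto_const_nhds.div hyP hP.ne')
  rw [show d⁻¹ * (φ₂ (Q / P) * P) = P * d⁻¹ * φ₂ (Q / P) by ring]
  refine ((hyP.mul hquot).mul hφ₂lim).congr' (eventually_nhdsWithin_of_forall fun ε hε => ?_)
  obtain ⟨hyε, heq⟩ := hy ε hε
  have hone : φ₁ 1 - φ₁ (P / y ε) = ε * φ₂ (Q / y ε) := by linarith
  simp only [Function.comp_apply, hone]
  field_simp [hyε.ne', (hφ₂pos ε hε).ne', (mem_Ioi.1 hε).ne']

lemma measurable_of_orlicz_eq {Ω : Type*} [MeasurableSpace Ω] (hm₁ : StrictMonoOn φ₁ (Ici 0))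
    (hm₂ : MonotoneOn φ₂ (Ici 0)) {p₁ p₂ f : Ω → ℝ} (hp₁m : Measurable p₁)
    (hp₂m : Measurable p₂) (hp₁0 : ∀ x, 0 < p₁ x) (hp₂0 : ∀ x, 0 ≤ p₂ x) {ε : ℝ} (hε : 0 ≤ ε)
    (hf : ∀ x, 0 < f x ∧ φ₁ (p₁ x / f x) + ε * φ₂ (p₂ x / f x) = 1) : Measurable f := by
  refine measurable_of_strictAntiOn_eq (G := fun x y => φ₁ (p₁ x / y) + ε * φ₂ (p₂ x / y))
    (fun y hy => ?_) (fun x => ?_) (fun x => (hf x).1) (fun x => (hf x).2)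
  · exact (hm₁.monotoneOn.measurable_comp_of_nonneg (hp₁m.div_const y)
      fun x => div_nonneg (hp₁0 x).le hy.le).add (measurable_const.mul
      (hm₂.measurable_comp_of_nonneg (hp₂m.div_const y) fun x => div_nonneg (hp₂0 x) hy.le))
  · have h₁ : StrictAntiOn (fun y => φ₁ (p₁ x / y)) (Ioi 0) :=
      hm₁.comp_strictAntiOn (fun a ha b _ hab => div_lt_div_of_pos_left (hp₁0 x) ha hab)
        fun y hy => div_nonneg (hp₁0 x).le (le_of_lt hy)
    have h₂ : AntitoneOn (fun y => ε * φ₂ (p₂ x / y)) (Ioi 0) := fun a ha b hb hab =>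
      mul_le_mul_of_nonneg_left (hm₂ (div_nonneg (hp₂0 x) (le_of_lt hb))
        (div_nonneg (hp₂0 x) (le_of_lt ha)) (div_le_div_of_nonneg_left (hp₂0 x) ha hab)) hε
    exact h₁.add_antitone h₂

end OrliczSum

lemma tendsto_integral_sub_div_of_dominated {α : Type*} [MeasurableSpace α] {μ : Measure α}
    {l : Filter ℝ} [l.IsCountablyGenerated] {F : ℝ → α → ℝ} {g h bound : α → ℝ}
    (hl : ∀ᶠ ε in l, ε ≠ 0) (hF : ∀ᶠ ε in l, AEStronglyMeasurable (F ε) μ) (hg : Integrable g μ)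
    (hbound : Integrable bound μ) (hle : ∀ᶠ ε in l, ∀ᵐ x ∂μ, ‖(F ε x - g x) / ε‖ ≤ bound x)
    (hlim : ∀ᵐ x ∂μ, Tendsto (fun ε => (F ε x - g x) / ε) l (𝓝 (h x))) :
    Tendsto (fun ε => ((∫ x, F ε x ∂μ) - ∫ x, g x ∂μ) / ε) l (𝓝 (∫ x, h x ∂μ)) := by
  have hmeas : ∀ᶠ ε in l, AEStronglyMeasurable (fun x => (F ε x - g x) / ε) μ := by
    filter_upwards [hF] with ε hFε
    fun_prop
  refine (tendsto_integral_filter_of_dominated_convergence bound hmeas hle hbound hlim).congr' ?_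
  filter_upwards [hl, hmeas, hle] with ε hε hmeasε hleε
  have hFε : Integrable (F ε) μ := by
    refine (((hbound.mono' hmeasε hleε).const_mul ε).add hg).congr (ae_of_all _ fun x => ?_)
    simp only [Pi.add_apply]
    field_simp
    ring
  rw [integral_div, integral_sub hFε hg]

theorem f_divergence_as_first_variation_general
    {Ω : Type*} [MeasurableSpace Ω] (μ : Measure Ω)
    (A : Set Ω) (hA : MeasurableSet A)
    (φ₁ φ₂ : ℝ → ℝ)
    (hc₂ : ContinuousOn φ₂ (Set.Ici 0))
    (hm₁ : StrictMonoOn φ₁ (Set.Ici 0)) (hm₂ : StrictMonoOn φ₂ (Set.Ici 0))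
    (h02 : φ₂ 0 = 0)
    (h11 : φ₁ 1 = 1)
    (d : ℝ) (hd : 0 < d)
    (hderiv : HasDerivWithinAt φ₁ d (Set.Iio 1) 1)
    (p₁ p₂ : Ω → ℝ) (hp₁m : Measurable p₁) (hp₂m : Measurable p₂)
    (hp₁0 : ∀ x, 0 < p₁ x) (hp₂0 : ∀ x, 0 ≤ p₂ x)
    (hp₁i : IntegrableOn p₁ A μ)
    (a₁ : ℝ) (hbound : ∀ x ∈ A, p₂ x / p₁ x < a₁)
    (F : ℝ → Ω → ℝ)
    (hF : ∀ ε : ℝ, 0 < ε → ∀ x : Ω,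
      0 < F ε x ∧ φ₁ (p₁ x / F ε x) + ε * φ₂ (p₂ x / F ε x) = 1) :
    Tendsto
      (fun ε => ((∫ x in A, F ε x ∂μ) - ∫ x in A, p₁ x ∂μ) / ε)
      (nhdsWithin 0 (Set.Ioi 0))
      (nhds (d⁻¹ * ∫ x in A, φ₂ (p₂ x / p₁ x) * p₁ x ∂μ)) := by
  have hM : ∀ x ∈ A, φ₂ (p₂ x / p₁ x) ≤ φ₂ (max a₁ 0) := fun x hx =>
    hm₂.monotoneOn (div_nonneg (hp₂0 x) (hp₁0 x).le) (le_max_right a₁ 0)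
      ((hbound x hx).le.trans (le_max_left a₁ 0))
  obtain ⟨C, hC⟩ := exists_eventually_abs_sub_div_le_of_orlicz_eq hm₁ h11 hderiv hd
    hm₂.monotoneOn h02 (φ₂ (max a₁ 0))
  rw [← integral_const_mul]
  refine tendsto_integral_sub_div_of_dominated (bound := fun x => C * p₁ x)
    (eventually_nhdsWithin_of_forall fun ε hε => (mem_Ioi.1 hε).ne')
    (eventually_nhdsWithin_of_forall fun ε hε => (measurable_of_orlicz_eq hm₁ hm₂.monotoneOn
      hp₁m hp₂m hp₁0 hp₂0 (mem_Ioi.1 hε).le (hF ε hε)).aestronglyMeasurable)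
    hp₁i (hp₁i.const_mul C) ?_ (ae_of_all _ fun x =>
      tendsto_sub_div_of_orlicz_eq hm₁ h11 hderiv hd.ne' hm₂ hc₂ h02 (hp₁0 x) (hp₂0 x)
        fun ε hε => hF ε hε x)
  filter_upwards [hC, self_mem_nhdsWithin] with ε hCε hε
  filter_upwards [ae_restrict_mem hA] with x hx
  exact hCε (hp₁0 x) (hp₂0 x) (hM x hx) (hF ε hε x).1 (hF ε hε x).2

theorem f_divergence_as_first_variation
    {Ω : Type*} [MeasurableSpace Ω] (μ : Measure Ω)
    (A : Set Ω) (hA : MeasurableSet A) (hA0 : μ A ≠ 0)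
    (φ₁ φ₂ : ℝ → ℝ)
    (hc₁ : ContinuousOn φ₁ (Set.Ici 0)) (hc₂ : ContinuousOn φ₂ (Set.Ici 0))
    (hm₁ : StrictMonoOn φ₁ (Set.Ici 0)) (hm₂ : StrictMonoOn φ₂ (Set.Ici 0))
    (h01 : φ₁ 0 = 0) (h02 : φ₂ 0 = 0)
    (h11 : φ₁ 1 = 1) (h12 : φ₂ 1 = 1)
    (hl₁ : Tendsto φ₁ atTop atTop) (hl₂ : Tendsto φ₂ atTop atTop)
    (d : ℝ) (hd : 0 < d)
    (hderiv : HasDerivWithinAt φ₁ d (Set.Iio 1) 1)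
    (p₁ p₂ : Ω → ℝ) (hp₁m : Measurable p₁) (hp₂m : Measurable p₂)
    (hp₁0 : ∀ x, 0 < p₁ x) (hp₂0 : ∀ x, 0 ≤ p₂ x)
    (hp₁i : IntegrableOn p₁ A μ)
    (a₁ : ℝ) (hbound : ∀ x ∈ A, p₂ x / p₁ x < a₁)
    (F : ℝ → Ω → ℝ)
    (hF : ∀ ε : ℝ, 0 < ε → ∀ x : Ω,
      0 < F ε x ∧ φ₁ (p₁ x / F ε x) + ε * φ₂ (p₂ x / F ε x) = 1) :
    Tendsto
      (fun ε => ((∫ x in A, F ε x ∂μ) - ∫ x in A, p₁ x ∂μ) / ε)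
      (nhdsWithin 0 (Set.Ioi 0))
      (nhds (d⁻¹ * ∫ x in A, φ₂ (p₂ x / p₁ x) * p₁ x ∂μ)) :=
  f_divergence_as_first_variation_general μ A hA φ₁ φ₂ hc₂ hm₁ hm₂ h02 h11 d hd hderiv p₁ p₂ hp₁m
    hp₂m hp₁0 hp₂0 hp₁i a₁ hbound F hF
end
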